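/- Assume f, g : ℝ → ℝ are C² and H : M → ℝ is C¹ and satisfies f(H(q,p)) = |p|²/2 − g(H(q,p))/|q| for all (q,p) ∈ M. Define A^i(q,p) = |p|² q^i − (p·q) p^i − g(H(q,p)) q^i/|q| and Ā^i(q,p) = −A^i(q,p)/√(−2 f(H(q,p))). Let E ∈ ℝ with f(E) < 0, and let L = q × p with components L^i. Then at every point (q,p) ∈ M with H(q,p) = E and f'(E) + g'(E)/|q| ≠ 0, one has {L^i, Ā^j}(q,p) = Σ_{k=1}^{3} ε_{ijk} Ā^k(q,p) for all i, j ∈ {1,2,3}, where ε_{ijk} is the Levi-Civita symbol. -/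

import Mathlib

noncomputable section

/-- Squared Euclidean norm on `ℝ³`. -/
def normSq (v : Fin 3 → ℝ) : ℝ := ∑ i, v i ^ 2

/-- Euclidean norm on `ℝ³`. -/
def nrm (v : Fin 3 → ℝ) : ℝ := Real.sqrt (normSq v)

/-- Euclidean inner product `p·q`. -/
def dotP (p q : Fin 3 → ℝ) : ℝ := ∑ i, p i * q i

/-- Partial derivative `∂F/∂q^k` of a Hamiltonian function at `(q,p)`. -/
def pdQ (F : (Fin 3 → ℝ) → (Fin 3 → ℝ) → ℝ) (q p : Fin 3 → ℝ) (k : Fin 3) : ℝ :=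
  deriv (fun t => F (Function.update q k t) p) (q k)

/-- Partial derivative `∂F/∂p^k` of a Hamiltonian function at `(q,p)`. -/
def pdP (F : (Fin 3 → ℝ) → (Fin 3 → ℝ) → ℝ) (q p : Fin 3 → ℝ) (k : Fin 3) : ℝ :=
  deriv (fun t => F q (Function.update p k t)) (p k)

/-- The Hamiltonian vector field `X_F(q,p) = (∂F/∂p, −∂F/∂q)`. -/
def Xham (F : (Fin 3 → ℝ) → (Fin 3 → ℝ) → ℝ) (q p : Fin 3 → ℝ) :
    (Fin 3 → ℝ) × (Fin 3 → ℝ) :=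
  (fun k => pdP F q p k, fun k => -pdQ F q p k)


/-- The canonical Poisson bracket `{F,G} = Σ_k (∂F/∂q^k ∂G/∂p^k − ∂F/∂p^k ∂G/∂q^k)`. -/
def pbr (F G : (Fin 3 → ℝ) → (Fin 3 → ℝ) → ℝ) (q p : Fin 3 → ℝ) : ℝ :=
  ∑ k, (pdQ F q p k * pdP G q p k - pdP F q p k * pdQ G q p k)

/-- Cross product on `ℝ³`; `cross q p` is the angular momentum `L = q × p` at `(q,p)`. -/
def cross (a b : Fin 3 → ℝ) : Fin 3 → ℝ :=
  fun i => a (i + 1) * b (i + 2) - a (i + 2) * b (i + 1)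

/-- The Levi-Civita symbol `ε_{ijk}` on three indices. -/
def levi (i j k : Fin 3) : ℝ :=
  (((i : ℕ) : ℝ) - ((j : ℕ) : ℝ)) * (((j : ℕ) : ℝ) - ((k : ℕ) : ℝ))
    * (((k : ℕ) : ℝ) - ((i : ℕ) : ℝ)) / 2

/-- The Laplace–Runge–Lenz vector `A^i = |p|² q^i − (p·q) p^i − g(H(q,p)) q^i/|q|`. -/
def LRL (g : ℝ → ℝ) (H : (Fin 3 → ℝ) → (Fin 3 → ℝ) → ℝ) (i : Fin 3) :
    (Fin 3 → ℝ) → (Fin 3 → ℝ) → ℝ :=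
  fun q p => normSq p * q i - dotP p q * p i - g (H q p) * q i / nrm q

/-- The rescaled Laplace–Runge–Lenz vector `Ā^i = −A^i/√(−2 f(H))`. -/
def LRLbar (f g : ℝ → ℝ) (H : (Fin 3 → ℝ) → (Fin 3 → ℝ) → ℝ) (i : Fin 3) :
    (Fin 3 → ℝ) → (Fin 3 → ℝ) → ℝ :=
  fun q p => -(LRL g H i q p) / Real.sqrt (-(2 * f (H q p)))

lemma normSq_pos {v : Fin 3 → ℝ} (hv : v ≠ 0) : 0 < normSq v := by
  have h : ∃ i, v i ≠ 0 := by
    by_contra h; push_neg at h; exact hv (funext h)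
  obtain ⟨i, hi⟩ := h
  exact Finset.sum_pos' (fun i _ => sq_nonneg (v i)) ⟨i, Finset.mem_univ i, by positivity⟩

lemma nrm_pos {v : Fin 3 → ℝ} (hv : v ≠ 0) : 0 < nrm v := Real.sqrt_pos.2 (normSq_pos hv)

lemma hasDerivAt_update_apply (q : Fin 3 → ℝ) (k j : Fin 3) (t : ℝ) :
    HasDerivAt (fun t => Function.update q k t j) (if j = k then 1 else 0) t := by
  simp only [Function.update_apply]
  split
  · exact hasDerivAt_id t
  · exact hasDerivAt_const t _

lemma hasDerivAt_normSq_update (q : Fin 3 → ℝ) (k : Fin 3) (t : ℝ) :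
    HasDerivAt (fun t => normSq (Function.update q k t)) (2 * t) t := by
  have h : HasDerivAt (fun t => normSq (Function.update q k t))
      (∑ j : Fin 3, (if j = k then (1:ℝ) else 0) * 2 * Function.update q k t j) t := by
    simp only [normSq]
    exact HasDerivAt.fun_sum fun j _ => by
      simpa [pow_two] using ((hasDerivAt_update_apply q k j t).fun_pow 2)
  convert h using 1
  simp [Finset.sum_ite_eq', mul_comm]

lemma hasDerivAt_dotP_update (p q : Fin 3 → ℝ) (k : Fin 3) (t : ℝ) :
    HasDerivAt (fun t => dotP p (Function.update q k t)) (p k) t := by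
  have h : HasDerivAt (fun t => dotP p (Function.update q k t))
      (∑ j : Fin 3, p j * (if j = k then (1:ℝ) else 0)) t := by
    simp only [dotP]
    exact HasDerivAt.fun_sum fun j _ => (hasDerivAt_update_apply q k j t).const_mul (p j)
  simpa [Finset.sum_ite_eq'] using h

lemma hasDerivAt_dotP_update_left (p q : Fin 3 → ℝ) (k : Fin 3) (t : ℝ) :
    HasDerivAt (fun t => dotP (Function.update p k t) q) (q k) t := by
  have h : HasDerivAt (fun t => dotP (Function.update p k t) q)
      (∑ j : Fin 3, (if j = k then (1:ℝ) else 0) * q j) t := by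
    simp only [dotP]
    exact HasDerivAt.fun_sum fun j _ => (hasDerivAt_update_apply p k j t).mul_const (q j)
  simpa [Finset.sum_ite_eq'] using h

lemma hasDerivAt_nrm_update (q : Fin 3 → ℝ) (k : Fin 3) (t : ℝ)
    (h : Function.update q k t ≠ 0) :
    HasDerivAt (fun t => nrm (Function.update q k t)) (t / nrm (Function.update q k t)) t := by
  have h0 : normSq (Function.update q k t) ≠ 0 := (normSq_pos h).ne'
  have h2 := (Real.hasDerivAt_sqrt h0).comp t (hasDerivAt_normSq_update q k t)
  have h3 : nrm (Function.update q k t) ≠ 0 := (nrm_pos h).ne'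
  refine h2.congr_deriv ?_
  simp only [nrm] at h3 ⊢
  field_simp

set_option maxHeartbeats 4000000 in
/-- under the implicit Kepler-type relation `f(H) = |p|²/2 − g(H)/|q|`, for a
value `E` with `f(E) < 0`, at every point of the levelset `H = E` with
`f'(E) + g'(E)/|q| ≠ 0` the angular momentum `L = q × p` and the rescaled Laplace–Runge–Lenz
vector satisfy `{L^i, Ā^j} = Σ_k ε_{ijk} Ā^k`. -/
theorem angular_momentum_bracket_rescaled_LRL
    (f g : ℝ → ℝ) (H : (Fin 3 → ℝ) → (Fin 3 → ℝ) → ℝ)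
    (hf : ContDiff ℝ 2 f) (hg : ContDiff ℝ 2 g)
    (hH : ContDiffOn ℝ 1 (fun x : (Fin 3 → ℝ) × (Fin 3 → ℝ) => H x.1 x.2) {x | x.1 ≠ 0})
    (hrel : ∀ q p : Fin 3 → ℝ, q ≠ 0 →
      f (H q p) = normSq p / 2 - g (H q p) / nrm q)
    (E : ℝ) (hE : f E < 0) :
    ∀ q p : Fin 3 → ℝ, q ≠ 0 → H q p = E →
      deriv f E + deriv g E / nrm q ≠ 0 →
      ∀ i j : Fin 3,
        pbr (fun q p => cross q p i) (LRLbar f g H j) q p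
          = ∑ k, levi i j k * LRLbar f g H k q p := by
  intro q p hq hHE hc i j
  have hr0 : (0:ℝ) < nrm q := nrm_pos hq
  have hr : nrm q ≠ 0 := hr0.ne'
  have hsE : (0:ℝ) < Real.sqrt (-(2 * f E)) := Real.sqrt_pos.2 (by linarith)
  have hsne : Real.sqrt (-(2 * f E)) ≠ 0 := hsE.ne'
  have hopen : IsOpen {x : (Fin 3 → ℝ) × (Fin 3 → ℝ) | x.1 ≠ 0} :=
    isOpen_compl_singleton.preimage continuous_fst
  have hdiffH : DifferentiableAt ℝ (fun x : (Fin 3 → ℝ) × (Fin 3 → ℝ) => H x.1 x.2) (q, p) :=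
    (hH.differentiableOn one_ne_zero).differentiableAt (hopen.mem_nhds hq)
  have hfE : HasDerivAt f (deriv f E) E :=
    ((hf.differentiable two_ne_zero) E).hasDerivAt
  have hgE : HasDerivAt g (deriv g E) E :=
    ((hg.differentiable two_ne_zero) E).hasDerivAt
  have hupdQ : ∀ k : Fin 3, Function.update q k (q k) = q := fun k => Function.update_eq_self k q
  have hupdP : ∀ k : Fin 3, Function.update p k (p k) = p := fun k => Function.update_eq_self k p
  -- the partial derivatives of H exist
  have hHQ : ∀ k, HasDerivAt (fun t => H (Function.update q k t) p) (pdQ H q p k) (q k) := by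
    intro k
    have h1 : DifferentiableAt ℝ (fun t : ℝ => (Function.update q k t, p)) (q k) :=
      (differentiableAt_pi.2 fun j => (hasDerivAt_update_apply q k j (q k)).differentiableAt).prodMk
        (differentiableAt_const _)
    have h2 : DifferentiableAt ℝ (fun x : (Fin 3 → ℝ) × (Fin 3 → ℝ) => H x.1 x.2)
        ((fun t : ℝ => (Function.update q k t, p)) (q k)) := by
      simpa [Function.update_eq_self] using hdiffH
    have h4 : DifferentiableAt ℝ (fun t => H (Function.update q k t) p) (q k) := by
      simpa [Function.comp_def] using h2.comp (q k) h1
    exact h4.hasDerivAt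
  have hHP : ∀ k, HasDerivAt (fun t => H q (Function.update p k t)) (pdP H q p k) (p k) := by
    intro k
    have h1 : DifferentiableAt ℝ (fun t : ℝ => (q, Function.update p k t)) (p k) :=
      (differentiableAt_const _).prodMk
        (differentiableAt_pi.2 fun j => (hasDerivAt_update_apply p k j (p k)).differentiableAt)
    have h2 : DifferentiableAt ℝ (fun x : (Fin 3 → ℝ) × (Fin 3 → ℝ) => H x.1 x.2)
        ((fun t : ℝ => (q, Function.update p k t)) (p k)) := by
      simpa [Function.update_eq_self] using hdiffH
    have h4 : DifferentiableAt ℝ (fun t => H q (Function.update p k t)) (p k) := by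
      simpa [Function.comp_def] using h2.comp (p k) h1
    exact h4.hasDerivAt
  -- compositions with f and g along coordinate lines
  have hLfQ : ∀ k, HasDerivAt (fun t => f (H (Function.update q k t) p))
      (deriv f E * pdQ H q p k) (q k) := by
    intro k
    have h : HasDerivAt f (deriv f E) (H (Function.update q k (q k)) p) := by
      rw [hupdQ, hHE]; exact hfE
    simpa [Function.comp_def] using h.comp (q k) (hHQ k)
  have hgQ : ∀ k, HasDerivAt (fun t => g (H (Function.update q k t) p))
      (deriv g E * pdQ H q p k) (q k) := by
    intro k
    have h : HasDerivAt g (deriv g E) (H (Function.update q k (q k)) p) := by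
      rw [hupdQ, hHE]; exact hgE
    simpa [Function.comp_def] using h.comp (q k) (hHQ k)
  have hLfP : ∀ k, HasDerivAt (fun t => f (H q (Function.update p k t)))
      (deriv f E * pdP H q p k) (p k) := by
    intro k
    have h : HasDerivAt f (deriv f E) (H q (Function.update p k (p k))) := by
      rw [hupdP, hHE]; exact hfE
    simpa [Function.comp_def] using h.comp (p k) (hHP k)
  have hgP : ∀ k, HasDerivAt (fun t => g (H q (Function.update p k t)))
      (deriv g E * pdP H q p k) (p k) := by
    intro k
    have h : HasDerivAt g (deriv g E) (H q (Function.update p k (p k))) := by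
      rw [hupdP, hHE]; exact hgE
    simpa [Function.comp_def] using h.comp (p k) (hHP k)
  have hnrmQ : ∀ k, HasDerivAt (fun t => nrm (Function.update q k t)) (q k / nrm q) (q k) := by
    intro k
    have h := hasDerivAt_nrm_update q k (q k) (by rw [hupdQ]; exact hq)
    rwa [hupdQ] at h
  -- values of the partial derivatives of H
  have hHQval : ∀ k, pdQ H q p k
      = g E * q k / ((deriv f E + deriv g E / nrm q) * nrm q ^ 3) := by
    intro k
    have hR : HasDerivAt (fun t => normSq p / 2
          - g (H (Function.update q k t) p) / nrm (Function.update q k t))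
        (0 - (deriv g E * pdQ H q p k * nrm q - g E * (q k / nrm q)) / nrm q ^ 2) (q k) := by
      have hdiv := (hgQ k).div (hnrmQ k) (by rw [hupdQ]; exact hr)
      rw [hupdQ, hHE] at hdiv
      exact (hasDerivAt_const (q k) (normSq p / 2)).sub hdiv
    have hev : ∀ᶠ t in nhds (q k), Function.update q k t ≠ 0 := by
      have hcont : Continuous (fun t : ℝ => Function.update q k t) :=
        continuous_pi fun j => by
          simp only [Function.update_apply]
          split
          · exact continuous_id
          · exact continuous_const
      exact (hcont.continuousAt (x := q k)).eventually_ne (by rw [hupdQ]; exact hq)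
    have hrelev : (fun t => f (H (Function.update q k t) p)) =ᶠ[nhds (q k)]
        (fun t => normSq p / 2
          - g (H (Function.update q k t) p) / nrm (Function.update q k t)) :=
      hev.mono fun t ht => hrel _ p ht
    have heq : deriv f E * pdQ H q p k
        = 0 - (deriv g E * pdQ H q p k * nrm q - g E * (q k / nrm q)) / nrm q ^ 2 :=
      (hLfQ k).unique (hR.congr_of_eventuallyEq hrelev)
    have hccr : (deriv f E + deriv g E / nrm q) * nrm q ^ 3 ≠ 0 :=
      mul_ne_zero hc (pow_ne_zero _ hr)
    rw [eq_div_iff hccr]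
    field_simp at heq ⊢
    linear_combination heq
  have hHPval : ∀ k, pdP H q p k = p k / (deriv f E + deriv g E / nrm q) := by
    intro k
    have hR : HasDerivAt (fun t => normSq (Function.update p k t) / 2
          - g (H q (Function.update p k t)) / nrm q)
        (2 * p k / 2 - deriv g E * pdP H q p k / nrm q) (p k) :=
      ((hasDerivAt_normSq_update p k (p k)).div_const 2).sub ((hgP k).div_const (nrm q))
    have heq : deriv f E * pdP H q p k
        = 2 * p k / 2 - deriv g E * pdP H q p k / nrm q := (hLfP k).unique (by
      apply hR.congr_of_eventuallyEq
      exact Filter.Eventually.of_forall fun t => hrel q _ hq)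
    rw [eq_div_iff hc]
    field_simp at heq ⊢
    linear_combination heq
  -- derivatives of the rescaled LRL vector
  have hAbarQ : ∀ kk : Fin 3, pdQ (LRLbar f g H j) q p kk =
      -(normSq p * (if j = kk then (1:ℝ) else 0) - p kk * p j
        - ((deriv g E * pdQ H q p kk * q j + g E * (if j = kk then (1:ℝ) else 0)) * nrm q
            - g E * q j * (q kk / nrm q)) / nrm q ^ 2) / Real.sqrt (-(2 * f E))
      - (normSq p * q j - dotP p q * p j - g E * q j / nrm q)
          * (deriv f E * pdQ H q p kk) / Real.sqrt (-(2 * f E)) ^ 3 := by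
    intro kk
    have h1 : HasDerivAt (fun t => normSq p * Function.update q kk t j)
        (normSq p * (if j = kk then (1:ℝ) else 0)) (q kk) :=
      (hasDerivAt_update_apply q kk j (q kk)).const_mul (normSq p)
    have h2 : HasDerivAt (fun t => dotP p (Function.update q kk t) * p j)
        (p kk * p j) (q kk) :=
      (hasDerivAt_dotP_update p q kk (q kk)).mul_const (p j)
    have h4 := (hgQ kk).mul (hasDerivAt_update_apply q kk j (q kk))
    have h5 := h4.div (hnrmQ kk) (by rw [hupdQ]; exact hr)
    rw [hupdQ, hHE] at h5
    have hN := ((h1.sub h2).sub h5).neg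
    have hfa := ((hLfQ kk).const_mul 2).neg
    have hsq : HasDerivAt Real.sqrt (1 / (2 * Real.sqrt (-(2 * f E))))
        (-(2 * f (H (Function.update q kk (q kk)) p))) := by
      rw [hupdQ, hHE]; exact Real.hasDerivAt_sqrt (by linarith)
    have hS : HasDerivAt (fun t => Real.sqrt (-(2 * f (H (Function.update q kk t) p))))
        (1 / (2 * Real.sqrt (-(2 * f E))) * -(2 * (deriv f E * pdQ H q p kk))) (q kk) := by
      simpa [Function.comp_def] using hsq.comp (q kk) hfa
    have hdiv := hN.div hS (by rw [hupdQ, hHE]; exact hsne)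
    rw [hupdQ, hHE] at hdiv
    have hdiv' : HasDerivAt (fun t => LRLbar f g H j (Function.update q kk t) p) _ (q kk) := hdiv
    conv_lhs => rw [pdQ]
    rw [hdiv'.deriv]
    simp only [Pi.neg_apply, Pi.sub_apply, Pi.mul_apply, Pi.div_apply, hupdQ, hHE]
    field_simp
  have hAbarP : ∀ kk : Fin 3, pdP (LRLbar f g H j) q p kk =
      -(2 * p kk * q j - (q kk * p j + dotP p q * (if j = kk then (1:ℝ) else 0))
        - deriv g E * pdP H q p kk * q j / nrm q) / Real.sqrt (-(2 * f E))
      - (normSq p * q j - dotP p q * p j - g E * q j / nrm q)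
          * (deriv f E * pdP H q p kk) / Real.sqrt (-(2 * f E)) ^ 3 := by
    intro kk
    have h1 : HasDerivAt (fun t => normSq (Function.update p kk t) * q j)
        (2 * p kk * q j) (p kk) :=
      (hasDerivAt_normSq_update p kk (p kk)).mul_const (q j)
    have h2 := (hasDerivAt_dotP_update_left p q kk (p kk)).mul
      (hasDerivAt_update_apply p kk j (p kk))
    rw [hupdP] at h2
    have h5 := ((hgP kk).mul_const (q j)).div_const (nrm q)
    have hN := ((h1.sub h2).sub h5).neg
    have hfa := ((hLfP kk).const_mul 2).neg
    have hsq : HasDerivAt Real.sqrt (1 / (2 * Real.sqrt (-(2 * f E))))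
        (-(2 * f (H q (Function.update p kk (p kk))))) := by
      rw [hupdP, hHE]; exact Real.hasDerivAt_sqrt (by linarith)
    have hS : HasDerivAt (fun t => Real.sqrt (-(2 * f (H q (Function.update p kk t)))))
        (1 / (2 * Real.sqrt (-(2 * f E))) * -(2 * (deriv f E * pdP H q p kk))) (p kk) := by
      simpa [Function.comp_def] using hsq.comp (p kk) hfa
    have hdiv := hN.div hS (by rw [hupdP, hHE]; exact hsne)
    rw [hupdP, hHE] at hdiv
    have hdiv' : HasDerivAt (fun t => LRLbar f g H j q (Function.update p kk t)) _ (p kk) := hdiv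
    conv_lhs => rw [pdP]
    rw [hdiv'.deriv]
    simp only [Pi.neg_apply, Pi.sub_apply, Pi.mul_apply, Pi.div_apply, hupdP, hHE]
    field_simp
  -- derivatives of the angular momentum
  have hLQ : ∀ kk : Fin 3, pdQ (fun a b => cross a b i) q p kk =
      (if i + 1 = kk then (1:ℝ) else 0) * p (i + 2)
        - (if i + 2 = kk then (1:ℝ) else 0) * p (i + 1) := by
    intro kk
    simp only [pdQ, cross]
    exact (((hasDerivAt_update_apply q kk (i + 1) (q kk)).mul_const (p (i + 2))).sub
      ((hasDerivAt_update_apply q kk (i + 2) (q kk)).mul_const (p (i + 1)))).deriv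
  have hLP : ∀ kk : Fin 3, pdP (fun a b => cross a b i) q p kk =
      q (i + 1) * (if i + 2 = kk then (1:ℝ) else 0)
        - q (i + 2) * (if i + 1 = kk then (1:ℝ) else 0) := by
    intro kk
    simp only [pdP, cross]
    exact (((hasDerivAt_update_apply p kk (i + 2) (p kk)).const_mul (q (i + 1))).sub
      ((hasDerivAt_update_apply p kk (i + 1) (p kk)).const_mul (q (i + 2)))).deriv
  have hbar : ∀ kk : Fin 3, LRLbar f g H kk q p
      = -(normSq p * q kk - dotP p q * p kk - g E * q kk / nrm q)
          / Real.sqrt (-(2 * f E)) := by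
    intro kk
    simp only [LRLbar, LRL, hHE]
  set C := deriv f E + deriv g E / nrm q with hC
  set FE := deriv f E with hFE
  set GE := deriv g E with hGE
  set GG := g E with hGG
  set R := nrm q with hR
  set S := Real.sqrt (-(2 * f E)) with hS
  set NS := normSq p with hNS
  set DP := dotP p q with hDP
  simp only [pbr, Fin.sum_univ_three]
  simp only [hLQ, hLP, hAbarQ, hAbarP, hbar, hHQval, hHPval, levi]
  have h3 : ∀ m : Fin 3, m = 0 ∨ m = 1 ∨ m = 2 := by decide
  field_simp
  rcases h3 i with rfl | rfl | rfl <;> rcases h3 j with rfl | rfl | rfl <;>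
    simp only [Fin.isValue, Fin.reduceAdd, Fin.reduceEq, reduceIte, Fin.val_zero, Fin.val_one,
      Fin.val_two, Nat.cast_zero, Nat.cast_one, Nat.cast_ofNat]
    <;> ring

end
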